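/- Feasibility preservation: with the setup above, suppose additionally x(λ) ≥ 0 componentwise and for each i, |δ| ‖e_i‖ ‖E x(λ)‖ / (1 − |λ+δ| ‖E‖) ≤ (x(λ))_i. Then x(λ+δ) ≥ 0 componentwise. -/

import Mathlib

/-!
Put `B = (λ + δ) E`. Since `‖B‖ < 1`, the matrix `I + B` is invertible and
`‖(I + B)⁻¹ y‖ ≤ ‖y‖ / (1 - ‖B‖)`. The resolvent identity
`x(λ + δ) = x(λ) - δ (I + B)⁻¹ E x(λ)` then perturbs each component of `x(λ)` by at most
`|δ| ‖e_i‖ ‖E x(λ)‖ / (1 - |λ + δ| ‖E‖)`, using `|w_i| = |e_i ⬝ w| ≤ ‖e_i‖ ‖w‖`.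
-/

open Matrix

section

variable {n : Type*} [Fintype n] (p : Seminorm ℝ (n → ℝ))

theorem Seminorm.pos_of_abs_dotProduct_le (hdual : ∀ c x, |c ⬝ᵥ x| ≤ p c * p x)
    {z : n → ℝ} (hz : z ≠ 0) : 0 < p z := by
  have hzz : 0 < |z ⬝ᵥ z| := abs_pos.mpr fun h => hz (dotProduct_self_eq_zero.mp h)
  nlinarith [hdual z z, apply_nonneg p z]

variable (N : Matrix n n ℝ → ℝ)

theorem Seminorm.sub_mul_le_add_mulVec (hcompat : ∀ A x, p (A *ᵥ x) ≤ N A * p x)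
    (B : Matrix n n ℝ) (w : n → ℝ) : (1 - N B) * p w ≤ p (w + B *ᵥ w) := by
  have hw : p w ≤ p (w + B *ᵥ w) + p (B *ᵥ w) := by
    simpa using map_sub_le_add p (w + B *ᵥ w) (B *ᵥ w)
  nlinarith [hcompat B w]

variable [DecidableEq n]

theorem Seminorm.abs_apply_le_of_abs_dotProduct_le (hdual : ∀ c x, |c ⬝ᵥ x| ≤ p c * p x)
    (w : n → ℝ) (i : n) : |w i| ≤ p (Pi.single i 1) * p w := by
  simpa [single_dotProduct] using hdual (Pi.single i 1) w

theorem Seminorm.isUnit_det_one_add (hcompat : ∀ A x, p (A *ᵥ x) ≤ N A * p x)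
    (hdual : ∀ c x, |c ⬝ᵥ x| ≤ p c * p x) {B : Matrix n n ℝ} (hB : N B < 1) :
    IsUnit (1 + B).det := by
  refine isUnit_iff_ne_zero.mpr fun hdet => ?_
  obtain ⟨v, hv0, hv⟩ := exists_mulVec_eq_zero_iff.mpr hdet
  have hle := p.sub_mul_le_add_mulVec N hcompat B v
  rw [add_mulVec, one_mulVec] at hv
  rw [hv, map_zero] at hle
  nlinarith [p.pos_of_abs_dotProduct_le hdual hv0]

theorem Seminorm.apply_inv_mulVec_le (hcompat : ∀ A x, p (A *ᵥ x) ≤ N A * p x)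
    (hdual : ∀ c x, |c ⬝ᵥ x| ≤ p c * p x) {B : Matrix n n ℝ} (hB : N B < 1) (y : n → ℝ) :
    p ((1 + B)⁻¹ *ᵥ y) ≤ p y / (1 - N B) := by
  have hA := p.isUnit_det_one_add N hcompat hdual hB
  set v := (1 + B)⁻¹ *ᵥ y
  have hv : v + B *ᵥ v = y := calc
    v + B *ᵥ v = (1 + B) *ᵥ v := by rw [add_mulVec, one_mulVec]
    _ = y := by rw [mulVec_mulVec, mul_nonsing_inv _ hA, one_mulVec]
  have hle := p.sub_mul_le_add_mulVec N hcompat B v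
  rw [hv] at hle
  rw [le_div_iff₀ (by linarith)]
  linarith

end

theorem Matrix.inv_one_add_smul_mulVec_eq_sub {n : Type*} [Fintype n] [DecidableEq n]
    (E : Matrix n n ℝ) {x x₀ : n → ℝ} {lam : ℝ} (hx : (1 + lam • E) *ᵥ x = x₀) (δ : ℝ)
    (hA : IsUnit (1 + (lam + δ) • E).det) :
    (1 + (lam + δ) • E)⁻¹ *ᵥ x₀ = x - δ • ((1 + (lam + δ) • E)⁻¹ *ᵥ (E *ᵥ x)) := by
  have hx₀ : x₀ = (1 + (lam + δ) • E) *ᵥ x - δ • (E *ᵥ x) := by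
    rw [← hx, add_mulVec, add_mulVec, one_mulVec, smul_mulVec, smul_mulVec]
    module
  rw [hx₀, mulVec_sub, mulVec_mulVec, nonsing_inv_mul _ hA, one_mulVec, mulVec_smul]

theorem stmt14_general {m : ℕ} (N : Matrix (Fin m) (Fin m) ℝ → ℝ)
    (nv : (Fin m → ℝ) → ℝ)
    (hNhomog : ∀ (c : ℝ) A, N (c • A) = |c| * N A)
    (hvtri : ∀ x y, nv (x + y) ≤ nv x + nv y)
    (hvhomog : ∀ (c : ℝ) x, nv (c • x) = |c| * nv x)
    (hcompat : ∀ (A : Matrix (Fin m) (Fin m) ℝ) (x : Fin m → ℝ), nv (A *ᵥ x) ≤ N A * nv x)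
    (hdual : ∀ (c x : Fin m → ℝ), |c ⬝ᵥ x| ≤ nv c * nv x)
    (E : Matrix (Fin m) (Fin m) ℝ) (x₀ : Fin m → ℝ) (lam δ : ℝ)
    (hlam : IsUnit ((1 : Matrix (Fin m) (Fin m) ℝ) + lam • E).det)
    (hsmall : N ((lam + δ) • E) < 1)
    (x : ℝ → (Fin m → ℝ))
    (hx : ∀ μ : ℝ, x μ = ((1 : Matrix (Fin m) (Fin m) ℝ) + μ • E)⁻¹ *ᵥ x₀)
    (hbound : ∀ i : Fin m,
      |δ| * nv (Pi.single i 1) * nv (E *ᵥ x lam) / (1 - |lam + δ| * N E) ≤ x lam i) :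
    ∀ i, 0 ≤ x (lam + δ) i := by
  intro i
  let p : Seminorm ℝ (Fin m → ℝ) := .of nv hvtri fun c v => by rw [hvhomog, Real.norm_eq_abs]
  have hA := p.isUnit_det_one_add N hcompat hdual hsmall
  have hxlam : (1 + lam • E) *ᵥ x lam = x₀ := by
    rw [hx, mulVec_mulVec, mul_nonsing_inv _ hlam, one_mulVec]
  set w := (1 + (lam + δ) • E)⁻¹ *ᵥ (E *ᵥ x lam)
  have hstep : x (lam + δ) i = x lam i - δ * w i := by
    rw [hx, E.inv_one_add_smul_mulVec_eq_sub hxlam δ hA]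
    rfl
  have hw : p w ≤ p (E *ᵥ x lam) / (1 - |lam + δ| * N E) := by
    rw [← hNhomog]
    exact p.apply_inv_mulVec_le N hcompat hdual hsmall _
  have hwi : |w i| ≤ nv (Pi.single i 1) * (nv (E *ᵥ x lam) / (1 - |lam + δ| * N E)) :=
    (p.abs_apply_le_of_abs_dotProduct_le hdual w i).trans
      (mul_le_mul_of_nonneg_left hw (apply_nonneg p _))
  calc
    0 ≤ x lam i - |δ| * |w i| := by
      rw [sub_nonneg]
      refine le_trans ?_ (hbound i)
      rw [mul_assoc, mul_div_assoc, mul_div_assoc]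
      gcongr
    _ ≤ x (lam + δ) i := by
      rw [hstep, ← abs_mul]
      linarith [le_abs_self (δ * w i)]

theorem stmt14 {m : ℕ} (N : Matrix (Fin m) (Fin m) ℝ → ℝ)
    (nv : (Fin m → ℝ) → ℝ)
    (hNnonneg : ∀ A, 0 ≤ N A)
    (hNtri : ∀ A B, N (A + B) ≤ N A + N B)
    (hNhomog : ∀ (c : ℝ) A, N (c • A) = |c| * N A)
    (hNsub : ∀ A B, N (A * B) ≤ N A * N B)
    (hvnonneg : ∀ x, 0 ≤ nv x)
    (hvtri : ∀ x y, nv (x + y) ≤ nv x + nv y)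
    (hvhomog : ∀ (c : ℝ) x, nv (c • x) = |c| * nv x)
    (hcompat : ∀ (A : Matrix (Fin m) (Fin m) ℝ) (x : Fin m → ℝ), nv (A *ᵥ x) ≤ N A * nv x)
    (hdual : ∀ (c x : Fin m → ℝ), |c ⬝ᵥ x| ≤ nv c * nv x)
    (E : Matrix (Fin m) (Fin m) ℝ) (x₀ : Fin m → ℝ) (lam δ : ℝ)
    (hlam : IsUnit ((1 : Matrix (Fin m) (Fin m) ℝ) + lam • E).det)
    (hsmall : N ((lam + δ) • E) < 1)
    (x : ℝ → (Fin m → ℝ))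
    (hx : ∀ μ : ℝ, x μ = ((1 : Matrix (Fin m) (Fin m) ℝ) + μ • E)⁻¹ *ᵥ x₀)
    (hpos : ∀ i, 0 ≤ x lam i)
    (hbound : ∀ i : Fin m,
      |δ| * nv (Pi.single i 1) * nv (E *ᵥ x lam) / (1 - |lam + δ| * N E) ≤ x lam i) :
    ∀ i, 0 ≤ x (lam + δ) i :=
  stmt14_general N nv hNhomog hvtri hvhomog hcompat hdual E x₀ lam δ hlam hsmall x hx hbound
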